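/- arXiv:2102.10549 — 5 statements merged into one kernel-verified Lean document; each statement's English description precedes it below -/
import Mathlib

section
/- Let f : ℝ → ℝ be lower semicontinuous and let g : ℝ → ℝ be the convex hull (largest convex minorant) of f, i.e. g is convex, g ≤ f, and every convex function h : ℝ → ℝ with h ≤ f satisfies h ≤ g. If a < b and f(x) > g(x) for every x ∈ (a,b), then g is affine on (a,b): there exist α, β ∈ ℝ such that g(x) = α + β·x for all x ∈ (a,b). -/
/-!
Let `L` be affine with `L ≤ g` outside an interval `(x, z)` on which `g < f`. If `g - L` had a
negative minimum `m`, the sublevel set `{g - L ≤ m / 2}` would be a compact subset of `(x, z)`, so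
lower semicontinuity would give `f - L - m ≥ δ > 0` on it; then `max g (L + m + δ)` would be a
convex minorant of `f` exceeding `g` at the minimum point. Applied to the chords of `g`, this makes
`g` concave on `(a, b)`; being also convex, it is affine there.
-/

open Set

theorem LowerSemicontinuousOn.exists_pos_le_of_isCompact {X : Type*} [TopologicalSpace X]
    {φ : X → ℝ} {K : Set X} (hφ : LowerSemicontinuousOn φ K) (hK : IsCompact K)
    (hpos : ∀ x ∈ K, 0 < φ x) : ∃ δ > 0, ∀ x ∈ K, δ ≤ φ x := by
  rcases K.eq_empty_or_nonempty with rfl | hne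
  · exact ⟨1, one_pos, fun x hx => hx.elim⟩
  · obtain ⟨x₀, hx₀, hmin⟩ := hφ.exists_isMinOn hne hK
    exact ⟨φ x₀, hpos x₀ hx₀, fun x hx => hmin hx⟩

theorem ConvexOn.continuous {E : Type*} [NormedAddCommGroup E] [NormedSpace ℝ E]
    [FiniteDimensional ℝ E] {φ : E → ℝ} (hφ : ConvexOn ℝ univ φ) : Continuous φ :=
  continuousOn_univ.1 (hφ.continuousOn isOpen_univ)

section ConvexOnField

variable {𝕜 : Type*} [Field 𝕜] [LinearOrder 𝕜] [IsStrictOrderedRing 𝕜] {s : Set 𝕜} {φ : 𝕜 → 𝕜}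

theorem ConvexOn.le_of_notMem_Ioo (hφ : ConvexOn 𝕜 s φ) {x z t : 𝕜} (hx : x ∈ s) (hz : z ∈ s)
    (ht : t ∈ s) (hxz : x < z) (hφxz : φ x = φ z) (htxz : t ∉ Ioo x z) : φ x ≤ φ t := by
  rcases lt_trichotomy t x with htx | rfl | hxt
  · refine hφ.le_left_of_right_le ht hz ?_ hφxz.ge
    rw [openSegment_eq_Ioo (htx.trans hxz)]
    exact ⟨htx, hxz⟩
  · exact le_rfl
  · have hzt : z ≤ t := not_lt.1 fun htz => htxz ⟨hxt, htz⟩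
    rcases hzt.eq_or_lt with rfl | hzt
    · exact hφxz.le
    · rw [hφxz]
      refine hφ.le_right_of_left_le hx ht ?_ hφxz.le
      rw [openSegment_eq_Ioo (hxz.trans hzt)]
      exact ⟨hxz, hzt⟩

theorem ConvexOn.eq_add_slope_mul_of_concaveOn (hcv : ConvexOn 𝕜 s φ) (hcc : ConcaveOn 𝕜 s φ)
    {p q : 𝕜} (hp : p ∈ s) (hq : q ∈ s) (hpq : p ≠ q) :
    ∀ x ∈ s, φ x = φ p + slope φ p q * (x - p) := by
  intro x hx
  rcases eq_or_ne x p with rfl | hxp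
  · simp
  have hx' : x ∈ s \ {p} := ⟨hx, hxp⟩
  have hq' : q ∈ s \ {p} := ⟨hq, hpq.symm⟩
  have hslope : slope φ p x = slope φ p q := by
    rcases le_total x q with hxq | hqx
    · exact le_antisymm (hcv.slope_mono hp hx' hq' hxq) (hcc.slope_anti hp hx' hq' hxq)
    · exact le_antisymm (hcc.slope_anti hp hq' hx' hqx) (hcv.slope_mono hp hq' hx' hqx)
  have h := sub_smul_slope φ p x
  rw [hslope, smul_eq_mul, vsub_eq_sub] at h
  linarith

end ConvexOnField

structure IsLargestConvexMinorant (f g : ℝ → ℝ) : Prop where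
  convexOn : ConvexOn ℝ univ g
  le : ∀ x, g x ≤ f x
  le_of_convexOn : ∀ h : ℝ → ℝ, ConvexOn ℝ univ h → (∀ x, h x ≤ f x) → ∀ x, h x ≤ g x

namespace IsLargestConvexMinorant

variable {f g : ℝ → ℝ}

theorem exists_pos_add_le (hf : LowerSemicontinuous f) (hg : IsLargestConvexMinorant f g)
    {ℓ : ℝ → ℝ} (hℓ : ConvexOn ℝ univ ℓ) {ε : ℝ} (hε : 0 < ε)
    (hK : IsCompact {x | g x ≤ ℓ x + ε}) (hlt : ∀ x, g x ≤ ℓ x + ε → ℓ x < f x) :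
    ∃ δ > 0, ∀ x, ℓ x + δ ≤ g x := by
  have hfℓ : LowerSemicontinuous fun x => f x + -ℓ x :=
    hf.add hℓ.continuous.neg.lowerSemicontinuous
  obtain ⟨δ₁, hδ₁, hδ₁le⟩ := (hfℓ.lowerSemicontinuousOn _).exists_pos_le_of_isCompact hK
    fun x hx => by linarith [hlt x hx]
  set δ := min ε δ₁
  have hmax_le : ∀ x, max (g x) (ℓ x + δ) ≤ f x := by
    refine fun x => max_le (hg.le x) ?_
    rcases le_or_gt (ℓ x + δ) (g x) with hx | hx
    · exact hx.trans (hg.le x)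
    · linarith [hδ₁le x (show g x ≤ ℓ x + ε by linarith [min_le_left ε δ₁]), min_le_right ε δ₁]
  refine ⟨δ, lt_min hε hδ₁, fun x => ?_⟩
  exact (le_max_right _ _).trans
    (hg.le_of_convexOn _ (hg.convexOn.sup (hℓ.add_const δ)) hmax_le x)

theorem le_of_forall_notMem_Ioo_le (hf : LowerSemicontinuous f)
    (hg : IsLargestConvexMinorant f g) {L : ℝ → ℝ} (hL : ConvexOn ℝ univ L) {x z : ℝ}
    (hout : ∀ t ∉ Ioo x z, L t ≤ g t) (hlt : ∀ t ∈ Ioo x z, g t < f t) (y : ℝ) : L y ≤ g y := by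
  by_contra! hy
  have hy_mem : y ∈ Ioo x z := by
    by_contra h
    exact hy.not_ge (hout y h)
  obtain ⟨w, -, hmin⟩ := isCompact_Icc.exists_isMinOn (nonempty_Icc.2 (hy_mem.1.trans hy_mem.2).le)
    (hg.convexOn.continuous.sub hL.continuous).continuousOn
  set m := g w - L w
  have hm : m < 0 := (hmin (Ioo_subset_Icc_self hy_mem)).trans_lt (by simpa using hy)
  have hglob : ∀ t, m ≤ g t - L t := fun t => by
    by_cases ht : t ∈ Icc x z
    · exact hmin ht
    · linarith [hout t fun h => ht (Ioo_subset_Icc_self h)]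
  have hK : {t | g t ≤ L t + m + -m / 2} ⊆ Ioo x z := fun t ht => by
    by_contra h
    linarith [hout t h, show g t ≤ L t + m + -m / 2 from ht]
  have hKc : IsCompact {t | g t ≤ L t + m + -m / 2} :=
    isCompact_Icc.of_isClosed_subset
      (isClosed_le hg.convexOn.continuous ((hL.add_const m).continuous.add_const _))
      (hK.trans Ioo_subset_Icc_self)
  obtain ⟨δ, hδ, hle⟩ := hg.exists_pos_add_le hf (hL.add_const m) (ε := -m / 2) (by linarith)
    hKc fun t ht => (by linarith [hglob t] : L t + m ≤ g t).trans_lt (hlt t (hK ht))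
  linarith [show L w + m + δ ≤ g w from hle w]

theorem slope_anti_adjacent (hf : LowerSemicontinuous f) (hg : IsLargestConvexMinorant f g)
    {x y z : ℝ} (hxy : x < y) (hyz : y < z) (hlt : ∀ t ∈ Ioo x z, g t < f t) :
    (g z - g y) / (z - y) ≤ (g y - g x) / (y - x) := by
  have hxz := hxy.trans hyz
  set s := (g z - g x) / (z - x)
  set L : ℝ → ℝ := fun t => s * t + (g x - s * x)
  have hLcv : ConvexOn ℝ univ L := ((LinearMap.mul ℝ ℝ s).convexOn convex_univ).add_const _
  have hLcc : ConcaveOn ℝ univ L := ((LinearMap.mul ℝ ℝ s).concaveOn convex_univ).add_const _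
  have hLx : L x = g x := by simp only [L]; ring
  have hLz : L z = g z := by simp only [L, s]; field_simp; ring
  have hout : ∀ t ∉ Ioo x z, L t ≤ g t := fun t ht => by
    simpa [hLx] using (hg.convexOn.sub hLcc).le_of_notMem_Ioo trivial trivial trivial hxz
      (by simp [hLx, hLz]) ht
  have hy : s * (y - x) ≤ g y - g x := by
    linarith [hg.le_of_forall_notMem_Ioo_le hf hLcv hout hlt y]
  rw [div_mul_eq_mul_div, div_le_iff₀ (sub_pos.2 hxz)] at hy
  rw [div_le_div_iff₀ (sub_pos.2 hyz) (sub_pos.2 hxy)]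
  linear_combination hy

theorem concaveOn_Ioo (hf : LowerSemicontinuous f) (hg : IsLargestConvexMinorant f g) {a b : ℝ}
    (hlt : ∀ x ∈ Ioo a b, g x < f x) : ConcaveOn ℝ (Ioo a b) g :=
  concaveOn_of_slope_anti_adjacent (convex_Ioo a b) fun hx hz hxy hyz =>
    hg.slope_anti_adjacent hf hxy hyz fun t ht => hlt t ⟨hx.1.trans ht.1, ht.2.trans hz.2⟩

end IsLargestConvexMinorant

theorem stmt0 (f g : ℝ → ℝ) (hf : LowerSemicontinuous f)
    (hg : ConvexOn ℝ Set.univ g) (hgf : ∀ x, g x ≤ f x)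
    (hmax : ∀ h : ℝ → ℝ, ConvexOn ℝ Set.univ h → (∀ x, h x ≤ f x) → ∀ x, h x ≤ g x)
    (a b : ℝ) (hab : a < b) (hfg : ∀ x ∈ Set.Ioo a b, g x < f x) :
    ∃ α β : ℝ, ∀ x ∈ Set.Ioo a b, g x = α + β * x := by
  have hull : IsLargestConvexMinorant f g := ⟨hg, hgf, hmax⟩
  obtain ⟨p, hap, hpb⟩ := exists_between hab
  obtain ⟨q, hpq, hqb⟩ := exists_between hpb
  have hp : p ∈ Ioo a b := ⟨hap, hpb⟩
  have hq : q ∈ Ioo a b := ⟨hap.trans hpq, hqb⟩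
  refine ⟨g p - slope g p q * p, slope g p q, fun x hx => ?_⟩
  rw [(hg.subset (subset_univ _) (convex_Ioo a b)).eq_add_slope_mul_of_concaveOn
    (hull.concaveOn_Ioo hf hfg) hp hq hpq.ne x hx]
  ring
end

section
/- Let f : ℝ → ℝ be continuous and let g : ℝ → ℝ be the convex hull (largest convex minorant) of f. Fix y ∈ ℝ and define, in the extended reals, X(y) = sup{x ∈ ℝ : x ≤ y and g(x) = f(x)} (with sup ∅ = −∞) and Z(y) = inf{z ∈ ℝ : z ≥ y and g(z) = f(z)} (with inf ∅ = +∞). If x, z ∈ ℝ with x < y < z and f(k) > f(x) + ((f(z) − f(x))/(z − x))·(k − x) for every k ∈ (x,z), then X(y) ≤ x and Z(y) ≥ z. -/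
open Set

/-! A convex minorant `g` of `f` lies below the chord of `g`, hence below the chord of `f`, between
any two points; where `f` is strictly above its own chord, `g` therefore cannot touch `f`. So the
contact set `{g = f}` misses `(x, z)`, and both bounds follow. -/

theorem ConvexOn.lt_of_secant_lt {s : Set ℝ} {f g : ℝ → ℝ} (hg : ConvexOn ℝ s g) {x z t : ℝ}
    (hx : x ∈ s) (hz : z ∈ s) (hgx : g x ≤ f x) (hgz : g z ≤ f z) (ht : t ∈ Ioo x z)
    (hsecant : f x + (f z - f x) / (z - x) * (t - x) < f t) : g t < f t := by
  obtain ⟨hxt, htz⟩ := ht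
  have hxz : 0 < z - x := by linarith
  have hg_chord := hg.secant_mono_aux1 hx hz hxt htz
  have hf_chord : (z - t) * f x + (t - x) * f z < (z - x) * f t :=
    calc (z - t) * f x + (t - x) * f z = (z - x) * (f x + (f z - f x) / (z - x) * (t - x)) := by
          field_simp; ring
      _ < (z - x) * f t := mul_lt_mul_of_pos_left hsecant hxz
  refine lt_of_mul_lt_mul_left ?_ hxz.le
  linarith [mul_le_mul_of_nonneg_left hgx (sub_pos.2 htz).le,
    mul_le_mul_of_nonneg_left hgz (sub_pos.2 hxt).le]

theorem stmt1_general (f g : ℝ → ℝ)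
    (hg : ConvexOn ℝ Set.univ g) (hgf : ∀ x, g x ≤ f x)
    (y x z : ℝ) (hxy : x < y) (hyz : y < z)
    (hline : ∀ k ∈ Set.Ioo x z, f x + (f z - f x) / (z - x) * (k - x) < f k) :
    sSup ((fun t : ℝ => (t : EReal)) '' {t : ℝ | t ≤ y ∧ g t = f t}) ≤ (x : EReal) ∧
    (z : EReal) ≤ sInf ((fun t : ℝ => (t : EReal)) '' {t : ℝ | y ≤ t ∧ g t = f t}) := by
  have hcontact : ∀ t ∈ Ioo x z, g t ≠ f t := fun t ht =>
    (hg.lt_of_secant_lt trivial trivial (hgf x) (hgf z) ht (hline t ht)).ne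
  constructor
  · refine sSup_le ?_
    rintro _ ⟨t, ⟨hty, htouch⟩, rfl⟩
    by_contra! hxt
    exact hcontact t ⟨EReal.coe_lt_coe_iff.1 hxt, hty.trans_lt hyz⟩ htouch
  · refine le_sInf ?_
    rintro _ ⟨t, ⟨hyt, htouch⟩, rfl⟩
    by_contra! htz
    exact hcontact t ⟨hxy.trans_le hyt, EReal.coe_lt_coe_iff.1 htz⟩ htouch

theorem stmt1 (f g : ℝ → ℝ) (hf : Continuous f)
    (hg : ConvexOn ℝ Set.univ g) (hgf : ∀ x, g x ≤ f x)
    (hmax : ∀ h : ℝ → ℝ, ConvexOn ℝ Set.univ h → (∀ x, h x ≤ f x) → ∀ x, h x ≤ g x)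
    (y x z : ℝ) (hxy : x < y) (hyz : y < z)
    (hline : ∀ k ∈ Set.Ioo x z, f x + (f z - f x) / (z - x) * (k - x) < f k) :
    sSup ((fun t : ℝ => (t : EReal)) '' {t : ℝ | t ≤ y ∧ g t = f t}) ≤ (x : EReal) ∧
    (z : EReal) ≤ sInf ((fun t : ℝ => (t : EReal)) '' {t : ℝ | y ≤ t ∧ g t = f t}) :=
  stmt1_general f g hg hgf y x z hxy hyz hline
end

section
/- For every u ∈ (0,1), φ(u) = (ℰ_u^c)'(G(u)−) = (ℰ_u^c)'(S(u)−), where g'(k−) denotes the left derivative of the convex function g at k. -/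
/-!
The left derivative of a convex function is the least slope of a supporting line, which gives
`φ(u) = (ℰ_u^c)'(G(u)-)`. The second identity rests on one property of the convex hull `f` of a
continuous function `E`: `f` is affine on every interval on which `f < E`, since otherwise a
supporting line of `f`, raised slightly, would be a larger convex minorant of `E`. If
`ℰ_u^c(G(u)) < ℰ_u(G(u))`, this applies on an interval `(a, S(u))` with `a < G(u)`, so the left
derivatives at `G(u)` and `S(u)` agree. The contact set defining `S(u)` is nonempty because
`ℰ_u ≥ 0` is asymptotic at `+∞` to a line of slope `1 - u > 0` that is nonpositive at `G(u)`:
without contact, the hull would be affine on a half-line `[a, ∞)` with `a < G(u)`, hence equal to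
that line there, and negative at `a`.
-/

open MeasureTheory Set Filter Topology

lemma convexOn_univ_affine (σ a c : ℝ) : ConvexOn ℝ univ (fun x : ℝ => σ * (x - a) + c) :=
  ⟨convex_univ, fun x _ y _ p q _ _ hpq => le_of_eq <| by
    simp only [smul_eq_mul]; linear_combination (σ * a - c) * hpq⟩

lemma eq_zero_of_tendsto_affine {p q r : ℝ}
    (h : Tendsto (fun x => p + q * (x - r)) atTop (𝓝 0)) : p = 0 := by
  have hq : Tendsto (fun _ : ℝ => q) atTop (𝓝 0) := by
    have hshift := h.comp (tendsto_atTop_add_const_right _ 1 tendsto_id)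
    refine (sub_zero (0 : ℝ) ▸ hshift.sub h).congr fun x => ?_
    simp only [Function.comp, id]
    ring
  obtain rfl := tendsto_nhds_unique tendsto_const_nhds hq
  simpa using h

namespace ConvexOn

variable {f : ℝ → ℝ} {a b x : ℝ}

lemma le_chord (hf : ConvexOn ℝ univ f) (hx : x ∈ Icc a b) :
    f x ≤ slope f a b * (x - a) + f a := by
  rcases hx.1.eq_or_lt with rfl | hax
  · simp
  have h := hf.secant_mono (mem_univ a) (mem_univ x) (mem_univ b) hax.ne' (hax.trans_le hx.2).ne'
    hx.2
  rw [div_le_iff₀ (sub_pos.2 hax)] at h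
  rw [slope_def_field]
  linarith

lemma chord_le (hf : ConvexOn ℝ univ f) (hab : a < b) (hx : x ∉ Ioo a b) :
    slope f a b * (x - a) + f a ≤ f x := by
  rw [slope_def_field]
  rcases lt_trichotomy x a with hxa | rfl | hax
  · have h := hf.secant_mono (mem_univ a) (mem_univ x) (mem_univ b) hxa.ne hab.ne'
      (hxa.trans hab).le
    rw [div_le_iff_of_neg (sub_neg.2 hxa)] at h
    linarith
  · simp
  · have hbx : b ≤ x := not_lt.1 fun hxb => hx ⟨hax, hxb⟩
    have h := hf.secant_mono (mem_univ a) (mem_univ b) (mem_univ x) hab.ne' hax.ne' hbx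
    rw [le_div_iff₀ (sub_pos.2 hax)] at h
    linarith

lemma isLeast_leftDeriv (hf : ConvexOn ℝ univ f) (x : ℝ) :
    IsLeast {ψ | ∀ y, f x + ψ * (y - x) ≤ f y} (derivWithin f (Iio x) x) := by
  have hx : x ∈ interior univ := by simp
  refine ⟨fun y => ?_, fun ψ hψ => ?_⟩
  · rcases lt_trichotomy y x with hyx | rfl | hxy
    · have h := hf.slope_le_leftDeriv_of_mem_interior (mem_univ y) hx hyx
      rw [slope_def_field, div_le_iff₀ (sub_pos.2 hyx)] at h
      linarith
    · simp
    · have h := (hf.leftDeriv_le_rightDeriv_of_mem_interior hx).trans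
        (hf.rightDeriv_le_slope_of_mem_interior hx (mem_univ y) hxy)
      rw [slope_def_field, le_div_iff₀ (sub_pos.2 hxy)] at h
      linarith
  · rw [hf.leftDeriv_eq_sSup_slope_of_mem_interior hx]
    refine csSup_le ⟨_, mem_image_of_mem _ (show x - 1 ∈ {y | y ∈ univ ∧ y < x} by simp)⟩ ?_
    rintro _ ⟨y, ⟨-, hyx⟩, rfl⟩
    rw [slope_def_field, div_le_iff_of_neg (sub_neg.2 hyx)]
    linarith [hψ y]

lemma sInf_subgradient_eq_leftDeriv (hf : ConvexOn ℝ univ f) (x : ℝ) :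
    sInf {ψ | ∀ y, f x + ψ * (y - x) ≤ f y} = derivWithin f (Iio x) x :=
  (hf.isLeast_leftDeriv x).csInf_eq

end ConvexOn

lemma derivWithin_Iio_of_eqOn_Icc {f : ℝ → ℝ} {a b x σ : ℝ}
    (hf : ∀ y ∈ Icc a b, f y = σ * (y - a) + f a) (hx : x ∈ Ioc a b) :
    derivWithin f (Iio x) x = σ := by
  have hline : HasDerivWithinAt (fun y => σ * (y - a) + f a) σ (Iio x) x := by
    simpa using (((hasDerivAt_id x).sub_const a).const_mul σ).add_const (f a) |>.hasDerivWithinAt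
  refine (hline.congr_of_eventuallyEq ?_ (hf x (Ioc_subset_Icc_self hx))).derivWithin
    (uniqueDiffWithinAt_Iio x)
  filter_upwards [Ioo_mem_nhdsLT hx.1] with y hy
  exact hf y ⟨hy.1.le, hy.2.le.trans hx.2⟩

structure IsLargestConvexMinorant_s7 {X : Type*} [AddCommGroup X] [Module ℝ X] (f E : X → ℝ) :
    Prop where
  convexOn : ConvexOn ℝ univ f
  le : ∀ x, f x ≤ E x
  le_of_convexOn : ∀ h : X → ℝ, ConvexOn ℝ univ h → (∀ x, h x ≤ E x) → ∀ x, h x ≤ f x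

namespace IsLargestConvexMinorant_s7

lemma le_of_forall_lt_imp_le {X : Type*} [AddCommGroup X] [Module ℝ X] {f E h : X → ℝ}
    (hf : IsLargestConvexMinorant_s7 f E) (hh : ConvexOn ℝ univ h)
    (hhE : ∀ x, f x < h x → h x ≤ E x) (x : X) : h x ≤ f x := by
  refine le_sup_right.trans (hf.le_of_convexOn _ (hf.convexOn.sup hh) (fun y => ?_) x)
  rcases lt_or_ge (f y) (h y) with hy | hy
  · exact sup_le (hf.le y) (hhE y hy)
  · exact sup_le (hf.le y) (hy.trans (hf.le y))

variable {f E : ℝ → ℝ} (hf : IsLargestConvexMinorant_s7 f E) (hE : Continuous E)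
include hf

lemma continuous : Continuous f :=
  continuousOn_univ.1 (hf.convexOn.continuousOn isOpen_univ)

include hE

lemma exists_lt_forall_Ioc_lt {g : ℝ} (hg : f g < E g) : ∃ a < g, ∀ x ∈ Ioc a g, f x < E x :=
  exists_Ioc_subset_of_mem_nhds ((isOpen_lt hf.continuous hE).mem_nhds hg) ⟨g - 1, by linarith⟩

lemma eqOn_chord_of_lt {a b : ℝ} (hab : a < b) (hlt : ∀ x ∈ Ioo a b, f x < E x) :
    ∀ x ∈ Icc a b, f x = slope f a b * (x - a) + f a := by
  set L : ℝ → ℝ := fun x => slope f a b * (x - a) + f a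
  have hLcont : Continuous L := by fun_prop
  have hL_out : ∀ x ∉ Ioo a b, L x ≤ f x := fun x hx => hf.convexOn.chord_le hab hx
  by_contra! ⟨x₀, hx₀, hne⟩
  obtain ⟨z, hz, hzmax⟩ := isCompact_Icc.exists_isMaxOn ⟨x₀, hx₀⟩
    (hLcont.sub hf.continuous).continuousOn
  set c := L z - f z
  have hc : 0 < c := (sub_pos.2 ((hf.convexOn.le_chord hx₀).lt_of_ne hne)).trans_le (hzmax hx₀)
  set M : ℝ → ℝ := fun x => max (f x - (L x - c)) (E x - f x)
  have hM : ∀ x ∈ Icc a b, 0 < M x := by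
    intro x hx
    by_cases hxo : x ∈ Ioo a b
    · exact lt_max_of_lt_right (sub_pos.2 (hlt x hxo))
    · exact lt_max_of_lt_left (by linarith [hL_out x hxo])
  obtain ⟨w, hw, hwmin⟩ := isCompact_Icc.exists_isMinOn (f := M) ⟨x₀, hx₀⟩
    ((hf.continuous.sub (hLcont.sub continuous_const)).max (hE.sub hf.continuous)).continuousOn
  obtain ⟨ε, hε, hεMc⟩ := exists_between (lt_min (hM w hw) hc)
  obtain ⟨hεM, hεc⟩ := lt_min_iff.1 hεMc
  -- The supporting line of slope `slope f a b` at `z`, raised by `ε`, is below `E` wherever it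
  -- exceeds `f`; yet it exceeds `f` at `z`.
  have hraised := hf.le_of_forall_lt_imp_le (convexOn_univ_affine (slope f a b) a (f a - c + ε))
    (fun x hx => ?_) z
  · simp only [c, L] at hraised
    linarith
  have hxI : x ∈ Icc a b := by
    by_contra hxI
    linarith [hL_out x fun h => hxI (Ioo_subset_Icc_self h)]
  have hfx : L x - f x ≤ c := hzmax hxI
  have hMx : M w ≤ M x := hwmin hxI
  rcases le_max_iff.1 hMx with h | h <;> simp only [L] at hfx h <;> linarith

lemma exists_ge_eq_of_tendsto {g s c : ℝ} (hs : 0 < s) (hc : c ≤ 0) (hE₀ : ∀ x, 0 ≤ E x)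
    (hA : ∀ x, s * (x - g) + c ≤ E x)
    (hlim : Tendsto (fun x => E x - (s * (x - g) + c)) atTop (𝓝 0)) :
    ∃ z, g ≤ z ∧ f z = E z := by
  by_contra! hne
  obtain ⟨a, hag, ha⟩ := hf.exists_lt_forall_Ioc_lt hE ((hf.le g).lt_of_ne (hne g le_rfl))
  have hlt : ∀ x, a < x → f x < E x := fun x hax =>
    if hxg : x ≤ g then ha x ⟨hax, hxg⟩ else (hf.le x).lt_of_ne (hne x (not_le.1 hxg).le)
  have hline : ∀ x, a + 1 ≤ x → f x = (f (a + 1) - f a) * (x - a) + f a := by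
    intro x hx
    have hchord := hf.eqOn_chord_of_lt hE (by linarith) fun y hy => hlt y hy.1
    have h₁ := hchord (a + 1) ⟨by linarith, hx⟩
    rw [hchord x ⟨by linarith, le_rfl⟩, show f (a + 1) - f a = slope f a x by
      rw [h₁]; ring]
  have hfA : ∀ x, s * (x - g) + c ≤ f x := hf.le_of_convexOn _ (convexOn_univ_affine s g c) hA
  have hf₀ : ∀ x, 0 ≤ f x := hf.le_of_convexOn _ (convexOn_const 0 convex_univ) hE₀
  have hlimf : Tendsto (fun x => f x - (s * (x - g) + c)) atTop (𝓝 0) :=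
    squeeze_zero (fun x => sub_nonneg.2 (hfA x)) (fun x => sub_le_sub_right (hf.le x) _) hlim
  have hfa : f a - (s * (a - g) + c) = 0 := by
    refine eq_zero_of_tendsto_affine (q := f (a + 1) - f a - s) (r := a) (hlimf.congr' ?_)
    filter_upwards [eventually_ge_atTop (a + 1)] with x hx
    rw [hline x hx]
    ring
  linarith [hf₀ a, mul_neg_of_pos_of_neg hs (sub_neg.2 hag)]

lemma leftDeriv_csInf_contact_eq {g : ℝ} (hT : ∃ z, g ≤ z ∧ f z = E z) :
    derivWithin f (Iio (sInf {z | g ≤ z ∧ f z = E z})) (sInf {z | g ≤ z ∧ f z = E z}) =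
      derivWithin f (Iio g) g := by
  set T := {z | g ≤ z ∧ f z = E z}
  have hTg : BddBelow T := ⟨g, fun z hz => hz.1⟩
  rcases (hf.le g).eq_or_lt with hg | hg
  · rw [(show IsLeast T g from ⟨⟨le_rfl, hg⟩, fun z hz => hz.1⟩).csInf_eq]
  have hST : sInf T ∈ T :=
    ((isClosed_le continuous_const continuous_id).inter (isClosed_eq hf.continuous hE)).csInf_mem
      hT hTg
  have hgS : g < sInf T := hST.1.lt_of_ne fun h => hg.ne (h ▸ hST.2)
  obtain ⟨a, hag, ha⟩ := hf.exists_lt_forall_Ioc_lt hE hg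
  have hlt : ∀ x ∈ Ioo a (sInf T), f x < E x := fun x hx =>
    if hxg : x ≤ g then ha x ⟨hx.1, hxg⟩ else
      (hf.le x).lt_of_ne fun h => (csInf_le hTg ⟨(not_le.1 hxg).le, h⟩).not_gt hx.2
  have hchord := hf.eqOn_chord_of_lt hE (hag.trans hgS) hlt
  rw [derivWithin_Iio_of_eqOn_Icc hchord ⟨hag.trans hgS, le_rfl⟩,
    derivWithin_Iio_of_eqOn_Icc hchord ⟨hag, hgS.le⟩]

end IsLargestConvexMinorant_s7

noncomputable def put (ρ : Measure ℝ) (k : ℝ) : ℝ := ∫ x, max (k - x) 0 ∂ρ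

section Put

variable {ρ : Measure ℝ} (hρ : Integrable (fun x => x) ρ)
include hρ

lemma integrable_put [IsFiniteMeasure ρ] (k : ℝ) : Integrable (fun x => max (k - x) 0) ρ :=
  ((integrable_const k).sub hρ).pos_part

lemma lipschitzWith_put [IsProbabilityMeasure ρ] : LipschitzWith 1 (put ρ) := by
  refine LipschitzWith.of_dist_le_mul fun a b => ?_
  rw [NNReal.coe_one, one_mul, Real.dist_eq, Real.dist_eq, put, put,
    ← integral_sub (integrable_put hρ a) (integrable_put hρ b)]
  have hpt : ∀ x, ‖max (a - x) 0 - max (b - x) 0‖ ≤ |a - b| := fun x => by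
    rw [Real.norm_eq_abs, ← sub_sub_sub_cancel_right a b x]
    exact abs_max_sub_max_le_abs _ _ _
  simpa using norm_integral_le_of_norm_le_const (μ := ρ) (Eventually.of_forall hpt)

lemma integral_const_sub_id [IsProbabilityMeasure ρ] (k : ℝ) :
    ∫ x, (k - x) ∂ρ = k - ∫ x, x ∂ρ := by
  simp [integral_sub (integrable_const k) hρ]

lemma sub_integral_le_put [IsProbabilityMeasure ρ] (k : ℝ) : k - ∫ x, x ∂ρ ≤ put ρ k :=
  integral_const_sub_id hρ k ▸ integral_mono ((integrable_const k).sub hρ) (integrable_put hρ k)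
    fun _ => le_max_left _ _

lemma mul_sub_le_put_sub_put [IsFiniteMeasure ρ] {g k u : ℝ} (hgk : g ≤ k)
    (hu : u ≤ (ρ (Iic g)).toReal) : u * (k - g) ≤ put ρ k - put ρ g := by
  have hind : (Iic g).indicator (fun _ => k - g) ≤ fun x => max (k - x) 0 - max (g - x) 0 := by
    intro x
    by_cases hx : x ≤ g
    · rw [indicator_of_mem (show x ∈ Iic g from hx)]
      simp only [max_eq_left (sub_nonneg.2 (hx.trans hgk)), max_eq_left (sub_nonneg.2 hx)]
      linarith
    · rw [indicator_of_notMem (show x ∉ Iic g from hx)]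
      simp only [max_eq_right (sub_nonpos.2 (not_le.1 hx).le), sub_zero, le_max_right]
  calc u * (k - g) ≤ (ρ (Iic g)).toReal * (k - g) := by gcongr
    _ = ∫ x, (Iic g).indicator (fun _ => k - g) x ∂ρ := by
      rw [integral_indicator_const _ measurableSet_Iic, measureReal_def, smul_eq_mul]
    _ ≤ put ρ k - put ρ g := by
      rw [put, put, ← integral_sub (integrable_put hρ k) (integrable_put hρ g)]
      exact integral_mono ((integrable_const _).indicator measurableSet_Iic)
        ((integrable_put hρ k).sub (integrable_put hρ g)) hind

lemma tendsto_put_sub [IsProbabilityMeasure ρ] :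
    Tendsto (fun k => put ρ k - (k - ∫ x, x ∂ρ)) atTop (𝓝 0) := by
  have hcall : ∀ k, put ρ k - (k - ∫ x, x ∂ρ) = ∫ x, max (x - k) 0 ∂ρ := by
    intro k
    rw [put, ← integral_const_sub_id hρ,
      ← integral_sub (g := (k - ·)) (integrable_put hρ k) ((integrable_const k).sub hρ)]
    congr 1 with x
    rw [← max_sub_sub_right, sub_self, zero_sub, neg_sub, max_comm]
  simp_rw [hcall]
  simpa using tendsto_integral_filter_of_dominated_convergence (fun x => |x|)
    (Eventually.of_forall fun k => by fun_prop)
    (eventually_ge_atTop 0 |>.mono fun k hk => Eventually.of_forall fun x => by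
      rw [Real.norm_eq_abs, abs_of_nonneg (le_max_right _ _)]
      exact max_le (by linarith [le_abs_self x]) (abs_nonneg x))
    hρ.abs
    (Eventually.of_forall fun x => tendsto_const_nhds.congr' <|
      (eventually_ge_atTop x).mono fun k hk => (max_eq_right (sub_nonpos.2 hk)).symm)

end Put

def ConvexOrder (μ ν : Measure ℝ) : Prop :=
  ∀ f : ℝ → ℝ, ConvexOn ℝ univ f → Integrable f μ → Integrable f ν → ∫ x, f x ∂μ ≤ ∫ x, f x ∂ν

namespace ConvexOrder

variable {μ ν : Measure ℝ} (hcx : ConvexOrder μ ν) (hμ : Integrable (fun x => x) μ)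
  (hν : Integrable (fun x => x) ν)
include hcx hμ hν

lemma integral_id_eq : ∫ x, x ∂μ = ∫ x, x ∂ν := by
  have hneg := hcx (fun x => -x) (concaveOn_id convex_univ).neg hμ.neg hν.neg
  rw [integral_neg, integral_neg, neg_le_neg_iff] at hneg
  exact le_antisymm (hcx _ (convexOn_id convex_univ) hμ hν) hneg

lemma put_le [IsFiniteMeasure μ] [IsFiniteMeasure ν] (k : ℝ) : put μ k ≤ put ν k :=
  hcx _ (((convexOn_const k convex_univ).sub (concaveOn_id convex_univ)).sup
    (convexOn_const 0 convex_univ)) (integrable_put hμ k) (integrable_put hν k)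

lemma sub_integral_le_put [IsProbabilityMeasure μ] (k : ℝ) : k - ∫ x, x ∂ν ≤ put μ k :=
  hcx.integral_id_eq hμ hν ▸ _root_.sub_integral_le_put hμ k

end ConvexOrder

noncomputable def putGap (μ ν : Measure ℝ) (g u k : ℝ) : ℝ :=
  put ν k - put μ (min k g) - u * max (k - g) 0

lemma tendsto_putGap_sub_affine {μ ν : Measure ℝ} [IsProbabilityMeasure ν]
    (hν : Integrable (fun x => x) ν) (g u : ℝ) :
    Tendsto (fun k => putGap μ ν g u k - ((1 - u) * (k - g) + (g - ∫ x, x ∂ν - put μ g)))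
      atTop (𝓝 0) := by
  refine (tendsto_put_sub hν).congr' ?_
  filter_upwards [eventually_ge_atTop g] with k hgk
  rw [putGap, min_eq_right hgk, max_eq_left (sub_nonneg.2 hgk)]
  ring

section PutGap

variable {μ ν : Measure ℝ} [IsProbabilityMeasure μ] [IsProbabilityMeasure ν]
  (hμ : Integrable (fun x => x) μ) (hν : Integrable (fun x => x) ν)
include hμ hν

lemma continuous_putGap (g u : ℝ) : Continuous (putGap μ ν g u) := by
  have := (lipschitzWith_put hμ).continuous
  have := (lipschitzWith_put hν).continuous
  unfold putGap
  fun_prop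

variable (hcx : ConvexOrder μ ν) {g u : ℝ} (hu : u ≤ (μ (Iic g)).toReal)
include hcx hu

lemma putGap_nonneg (k : ℝ) : 0 ≤ putGap μ ν g u k := by
  have hput := hcx.put_le hμ hν k
  rcases le_total k g with hkg | hgk
  · simp [putGap, min_eq_left hkg, max_eq_right (sub_nonpos.2 hkg), hput]
  · rw [putGap, min_eq_right hgk, max_eq_left (sub_nonneg.2 hgk)]
    linarith [mul_sub_le_put_sub_put hμ hgk hu]

lemma affine_le_putGap (hu₁ : u ≤ 1) (k : ℝ) :
    (1 - u) * (k - g) + (g - ∫ x, x ∂ν - put μ g) ≤ putGap μ ν g u k := by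
  rcases le_total k g with hkg | hgk
  · nlinarith [putGap_nonneg hμ hν hcx hu k, hcx.sub_integral_le_put hμ hν g]
  · rw [putGap, min_eq_right hgk, max_eq_left (sub_nonneg.2 hgk)]
    linarith [sub_integral_le_put hν k]

end PutGap

theorem stmt7_general
    (μ ν : Measure ℝ)
    [IsProbabilityMeasure μ] [IsProbabilityMeasure ν]
    (hμint : Integrable (fun x => x) μ) (hνint : Integrable (fun x => x) ν)
    (hcx : ∀ f : ℝ → ℝ, ConvexOn ℝ Set.univ f → Integrable f μ → Integrable f ν →
      ∫ x, f x ∂μ ≤ ∫ x, f x ∂ν)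
    (Pμ Pν : ℝ → ℝ)
    (hPμ : ∀ k, Pμ k = ∫ x, max (k - x) 0 ∂μ)
    (hPν : ∀ k, Pν k = ∫ x, max (k - x) 0 ∂ν)
    (G : ℝ → ℝ)
    (hGq : ∀ u ∈ Set.Ioo (0:ℝ) 1,
      (μ (Set.Iio (G u))).toReal ≤ u ∧ u ≤ (μ (Set.Iic (G u))).toReal)
    (E Ec : ℝ → ℝ → ℝ)
    (hE : ∀ u ∈ Set.Ioo (0:ℝ) 1, ∀ k, E u k = Pν k - Pμ (min k (G u)) - u * max (k - G u) 0)
    (hEcConv : ∀ u ∈ Set.Ioo (0:ℝ) 1, ConvexOn ℝ Set.univ (Ec u))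
    (hEcLe : ∀ u ∈ Set.Ioo (0:ℝ) 1, ∀ k, Ec u k ≤ E u k)
    (hEcMax : ∀ u ∈ Set.Ioo (0:ℝ) 1, ∀ h : ℝ → ℝ, ConvexOn ℝ Set.univ h →
      (∀ k, h k ≤ E u k) → ∀ k, h k ≤ Ec u k)
    (S : ℝ → ℝ) (hS : ∀ u ∈ Set.Ioo (0:ℝ) 1, S u = sInf {z : ℝ | G u ≤ z ∧ Ec u z = E u z})
    (φ : ℝ → ℝ) (hφ : ∀ u ∈ Set.Ioo (0:ℝ) 1,
      φ u = sInf {ψ : ℝ | ∀ y, Ec u (G u) + ψ * (y - G u) ≤ Ec u y})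
    :
    ∀ u ∈ Set.Ioo (0:ℝ) 1,
      φ u = derivWithin (Ec u) (Set.Iio (G u)) (G u) ∧
      φ u = derivWithin (Ec u) (Set.Iio (S u)) (S u) := by
  intro u hu
  obtain rfl : Pμ = put μ := funext hPμ
  obtain rfl : Pν = put ν := funext hPν
  have hEu : E u = putGap μ ν (G u) u := funext (hE u hu)
  have hhull : IsLargestConvexMinorant_s7 (Ec u) (E u) := ⟨hEcConv u hu, hEcLe u hu, hEcMax u hu⟩
  have hEcont : Continuous (E u) := hEu ▸ continuous_putGap hμint hνint _ _
  have hmass := (hGq u hu).2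
  have hcontact : ∃ z, G u ≤ z ∧ Ec u z = E u z := by
    rw [hEu] at hhull ⊢
    exact hhull.exists_ge_eq_of_tendsto (continuous_putGap hμint hνint _ _) (sub_pos.2 hu.2)
      (by linarith [ConvexOrder.sub_integral_le_put hcx hμint hνint (G u)])
      (putGap_nonneg hμint hνint hcx hmass) (affine_le_putGap hμint hνint hcx hmass hu.2.le)
      (tendsto_putGap_sub_affine hνint _ _)
  rw [hφ u hu, hS u hu, hhull.convexOn.sInf_subgradient_eq_leftDeriv,
    hhull.leftDeriv_csInf_contact_eq hEcont hcontact]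
  exact ⟨rfl, rfl⟩

theorem stmt7
    (μ ν : Measure ℝ)
    [IsProbabilityMeasure μ] [IsProbabilityMeasure ν]
    (hμint : Integrable (fun x => x) μ) (hνint : Integrable (fun x => x) ν)
    (hcx : ∀ f : ℝ → ℝ, ConvexOn ℝ Set.univ f → Integrable f μ → Integrable f ν →
      ∫ x, f x ∂μ ≤ ∫ x, f x ∂ν)
    (Pμ Pν D : ℝ → ℝ)
    (hPμ : ∀ k, Pμ k = ∫ x, max (k - x) 0 ∂μ)
    (hPν : ∀ k, Pν k = ∫ x, max (k - x) 0 ∂ν)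
    (hD : ∀ k, D k = Pν k - Pμ k)
    (hDconn : Set.OrdConnected {k : ℝ | 0 < D k})
    (G : ℝ → ℝ) (hGmono : MonotoneOn G (Set.Ioo 0 1))
    (hGq : ∀ u ∈ Set.Ioo (0:ℝ) 1,
      (μ (Set.Iio (G u))).toReal ≤ u ∧ u ≤ (μ (Set.Iic (G u))).toReal)
    (E Ec : ℝ → ℝ → ℝ)
    (hE : ∀ u ∈ Set.Ioo (0:ℝ) 1, ∀ k, E u k = Pν k - Pμ (min k (G u)) - u * max (k - G u) 0)
    (hEcConv : ∀ u ∈ Set.Ioo (0:ℝ) 1, ConvexOn ℝ Set.univ (Ec u))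
    (hEcLe : ∀ u ∈ Set.Ioo (0:ℝ) 1, ∀ k, Ec u k ≤ E u k)
    (hEcMax : ∀ u ∈ Set.Ioo (0:ℝ) 1, ∀ h : ℝ → ℝ, ConvexOn ℝ Set.univ h →
      (∀ k, h k ≤ E u k) → ∀ k, h k ≤ Ec u k)
    (S : ℝ → ℝ) (hS : ∀ u ∈ Set.Ioo (0:ℝ) 1, S u = sInf {z : ℝ | G u ≤ z ∧ Ec u z = E u z})
    (φ : ℝ → ℝ) (hφ : ∀ u ∈ Set.Ioo (0:ℝ) 1,
      φ u = sInf {ψ : ℝ | ∀ y, Ec u (G u) + ψ * (y - G u) ≤ Ec u y})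
    :
    ∀ u ∈ Set.Ioo (0:ℝ) 1,
      φ u = derivWithin (Ec u) (Set.Iio (G u)) (G u) ∧
      φ u = derivWithin (Ec u) (Set.Iio (S u)) (S u) :=
  stmt7_general μ ν hμint hνint hcx Pμ Pν hPμ hPν G hGq E Ec hE hEcConv hEcLe hEcMax S hS φ hφ
end

section
/- Let 0 < u < v < 1 and k ∈ ℝ with G(v−) ≤ k ≤ G(v+) and G(u+) < k, where G(w−) and G(w+) denote the one-sided limits of the nondecreasing function G at w. Suppose ℰ_v'(k−) ≤ ℰ_v'(k+) and ψ ∈ [ℰ_v'(k−), ℰ_v'(k+)], where ℰ_w'(k−) and ℰ_w'(k+) denote the one-sided derivatives of ℰ_w at k (which exist since each ℰ_w is a difference of convex functions). Then ℰ_u'(k−) ≤ ψ + (v−u) ≤ ℰ_u'(k+). -/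
/-!
Write `ℰ_w = P_ν - Q_w`, where `Q_w` agrees with `P_μ` up to `G w` and continues beyond it as
the line of slope `w`. Since `G u < k`, `Q_u` is affine near `k`, so `ℰ_u` has one-sided slopes
`P_ν'(k±) - u`. For `Q_v`, the left slope at `k` is either `v` or
`P_μ'(k-) ≤ μ(-∞, k) ≤ μ(-∞, G v) ≤ v`, and the right slope is either `v` or
`P_μ'(k+) ≥ μ(-∞, k] ≥ v`, the last step because `G w ≤ k` for all `w < v`. Hence
`ℰ_u'(k-) ≤ ℰ_v'(k-) + (v - u)` and `ℰ_v'(k+) + (v - u) ≤ ℰ_u'(k+)`.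
-/

open MeasureTheory Set

noncomputable def putPrice (ρ : Measure ℝ) (k : ℝ) : ℝ := ∫ x, max (k - x) 0 ∂ρ

section putPrice

variable {ρ : Measure ℝ} [IsFiniteMeasure ρ]

lemma integrable_max_sub_zero (hρ : Integrable (fun x => x) ρ) (k : ℝ) :
    Integrable (fun x => max (k - x) 0) ρ :=
  ((integrable_const k).sub hρ).pos_part

lemma putPrice_sub (hρ : Integrable (fun x => x) ρ) (a b : ℝ) :
    putPrice ρ b - putPrice ρ a = ∫ x, (max (b - x) 0 - max (a - x) 0) ∂ρ :=
  (integral_sub (integrable_max_sub_zero hρ b) (integrable_max_sub_zero hρ a)).symm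

lemma convexOn_putPrice (hρ : Integrable (fun x => x) ρ) : ConvexOn ℝ univ (putPrice ρ) := by
  refine ⟨convex_univ, fun x _ y _ a b ha hb hab => ?_⟩
  have hpayoff (t : ℝ) : ConvexOn ℝ univ (fun k => max (k - t) 0) :=
    (convexOn_id convex_univ).sub (concaveOn_const t convex_univ) |>.sup
      (convexOn_const 0 convex_univ)
  have hx := (integrable_max_sub_zero hρ x).const_mul a
  have hy := (integrable_max_sub_zero hρ y).const_mul b
  simp only [putPrice, smul_eq_mul]
  rw [← integral_const_mul, ← integral_const_mul, ← integral_add hx hy]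
  exact integral_mono (integrable_max_sub_zero hρ _) (hx.add hy)
    fun t => (hpayoff t).2 trivial trivial ha hb hab

lemma putPrice_sub_le (hρ : Integrable (fun x => x) ρ) {a b : ℝ} (hab : a ≤ b) :
    putPrice ρ b - putPrice ρ a ≤ (b - a) * ρ.real (Iio b) := by
  rw [putPrice_sub hρ, mul_comm, ← smul_eq_mul, ← integral_indicator_const _ measurableSet_Iio]
  refine integral_mono ((integrable_max_sub_zero hρ b).sub (integrable_max_sub_zero hρ a))
    ((integrable_const _).indicator measurableSet_Iio) fun x => ?_
  by_cases hx : x < b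
  · rw [indicator_of_mem (mem_Iio.2 hx)]
    exact sub_le_iff_le_add.2 (max_le (by linarith [le_max_left (a - x) 0])
      (by linarith [le_max_right (a - x) 0]))
  · rw [indicator_of_notMem (mt mem_Iio.1 hx), max_eq_right (by linarith),
      max_eq_right (by linarith), sub_zero]

lemma mul_measureReal_Iic_le_putPrice_sub (hρ : Integrable (fun x => x) ρ) {a b : ℝ}
    (hab : a ≤ b) : (b - a) * ρ.real (Iic a) ≤ putPrice ρ b - putPrice ρ a := by
  rw [putPrice_sub hρ, mul_comm, ← smul_eq_mul, ← integral_indicator_const _ measurableSet_Iic]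
  refine integral_mono ((integrable_const _).indicator measurableSet_Iic)
    ((integrable_max_sub_zero hρ b).sub (integrable_max_sub_zero hρ a)) fun x => ?_
  by_cases hx : x ≤ a
  · rw [indicator_of_mem (mem_Iic.2 hx), max_eq_left (by linarith), max_eq_left (by linarith)]
    linarith
  · rw [indicator_of_notMem (mt mem_Iic.1 hx)]
    exact sub_nonneg.2 (max_le_max_right 0 (by linarith))

lemma leftDeriv_putPrice_le (hρ : Integrable (fun x => x) ρ) (k : ℝ) :
    derivWithin (putPrice ρ) (Iio k) k ≤ ρ.real (Iio k) := by
  rw [(convexOn_putPrice hρ).leftDeriv_eq_sSup_slope_of_mem_interior (by simp)]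
  refine csSup_le ⟨_, mem_image_of_mem _ ⟨trivial, sub_one_lt k⟩⟩ ?_
  rintro _ ⟨x, ⟨-, hx : x < k⟩, rfl⟩
  rw [slope_comm, slope_def_field, div_le_iff₀ (sub_pos.2 hx), mul_comm]
  exact putPrice_sub_le hρ hx.le

lemma measureReal_Iic_le_rightDeriv_putPrice (hρ : Integrable (fun x => x) ρ) (k : ℝ) :
    ρ.real (Iic k) ≤ derivWithin (putPrice ρ) (Ioi k) k := by
  rw [(convexOn_putPrice hρ).rightDeriv_eq_sInf_slope_of_mem_interior (by simp)]
  refine le_csInf ⟨_, mem_image_of_mem _ ⟨trivial, lt_add_one k⟩⟩ ?_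
  rintro _ ⟨x, ⟨-, hx : k < x⟩, rfl⟩
  rw [slope_def_field, le_div_iff₀ (sub_pos.2 hx), mul_comm]
  exact mul_measureReal_Iic_le_putPrice_sub hρ hx.le

end putPrice

def extendAffineAbove (Q : ℝ → ℝ) (a w : ℝ) (x : ℝ) : ℝ :=
  Q (min x a) + w * max (x - a) 0

section extendAffineAbove

variable {Q : ℝ → ℝ} {a w k q : ℝ}

lemma extendAffineAbove_of_le {x : ℝ} (h : x ≤ a) : extendAffineAbove Q a w x = Q x := by
  simp [extendAffineAbove, h]

lemma extendAffineAbove_of_ge {x : ℝ} (h : a ≤ x) :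
    extendAffineAbove Q a w x = Q a + w * (x - a) := by
  simp [extendAffineAbove, h]

lemma hasDerivWithinAt_extendAffineAbove_Ioi (h : a ≤ k) :
    HasDerivWithinAt (extendAffineAbove Q a w) w (Ioi k) k := by
  have hline : HasDerivWithinAt (fun x => Q a + w * (x - a)) w (Ioi k) k := by
    simpa using ((hasDerivWithinAt_id k (Ioi k)).sub_const a).const_mul w |>.const_add (Q a)
  exact hline.congr (fun _ hx => extendAffineAbove_of_ge (h.trans (le_of_lt hx)))
    (extendAffineAbove_of_ge h)

lemma hasDerivAt_extendAffineAbove_of_lt (h : a < k) :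
    HasDerivAt (extendAffineAbove Q a w) w k := by
  have hline : HasDerivAt (fun x => Q a + w * (x - a)) w k := by
    simpa using ((hasDerivAt_id k).sub_const a).const_mul w |>.const_add (Q a)
  exact hline.congr_of_eventuallyEq
    (eventually_ge_nhds h |>.mono fun _ hx => extendAffineAbove_of_ge hx)

lemma HasDerivWithinAt.extendAffineAbove_Iio (hQ : HasDerivWithinAt Q q (Iio k) k)
    (h : k ≤ a) : HasDerivWithinAt (extendAffineAbove Q a w) q (Iio k) k :=
  hQ.congr (fun _ hx => extendAffineAbove_of_le ((le_of_lt hx).trans h))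
    (extendAffineAbove_of_le h)

lemma HasDerivWithinAt.extendAffineAbove_of_lt {s : Set ℝ} (hQ : HasDerivWithinAt Q q s k)
    (h : k < a) : HasDerivWithinAt (extendAffineAbove Q a w) q s k :=
  hQ.congr_of_eventuallyEq
    (eventually_nhdsWithin_of_eventually_nhds (eventually_le_nhds h) |>.mono
      fun _ hx => extendAffineAbove_of_le hx) (extendAffineAbove_of_le h.le)

lemma ConvexOn.differentiableWithinAt_Iio_extendAffineAbove (hQ : ConvexOn ℝ univ Q) :
    DifferentiableWithinAt ℝ (extendAffineAbove Q a w) (Iio k) k := by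
  rcases lt_or_ge a k with h | h
  · exact (hasDerivAt_extendAffineAbove_of_lt h).hasDerivWithinAt.differentiableWithinAt
  · exact ((hQ.hasDerivWithinAt_leftDeriv_of_mem_interior (by simp)).extendAffineAbove_Iio
      h).differentiableWithinAt

lemma ConvexOn.differentiableWithinAt_Ioi_extendAffineAbove (hQ : ConvexOn ℝ univ Q) :
    DifferentiableWithinAt ℝ (extendAffineAbove Q a w) (Ioi k) k := by
  rcases le_or_gt a k with h | h
  · exact (hasDerivWithinAt_extendAffineAbove_Ioi h).differentiableWithinAt
  · exact ((hQ.hasDerivWithinAt_rightDeriv_of_mem_interior (by simp)).extendAffineAbove_of_lt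
      h).differentiableWithinAt

lemma derivWithin_extendAffineAbove_of_lt {s : Set ℝ} (h : a < k)
    (hs : UniqueDiffWithinAt ℝ s k) :
    derivWithin (extendAffineAbove Q a w) s k = w :=
  (hasDerivAt_extendAffineAbove_of_lt h).hasDerivWithinAt.derivWithin hs

variable {P : ℝ → ℝ}

lemma ConvexOn.derivWithin_sub_extendAffineAbove_Iio (hP : ConvexOn ℝ univ P)
    (hQ : ConvexOn ℝ univ Q) :
    derivWithin (P - extendAffineAbove Q a w) (Iio k) k =
      derivWithin P (Iio k) k - derivWithin (extendAffineAbove Q a w) (Iio k) k :=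
  derivWithin_sub (hP.differentiableWithinAt_Iio_of_mem_interior (by simp))
    hQ.differentiableWithinAt_Iio_extendAffineAbove

lemma ConvexOn.derivWithin_sub_extendAffineAbove_Ioi (hP : ConvexOn ℝ univ P)
    (hQ : ConvexOn ℝ univ Q) :
    derivWithin (P - extendAffineAbove Q a w) (Ioi k) k =
      derivWithin P (Ioi k) k - derivWithin (extendAffineAbove Q a w) (Ioi k) k :=
  derivWithin_sub (hP.differentiableWithinAt_Ioi_of_mem_interior (by simp))
    hQ.differentiableWithinAt_Ioi_extendAffineAbove

end extendAffineAbove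

section

variable {ρ : Measure ℝ} [IsFiniteMeasure ρ] {a w : ℝ}

lemma leftDeriv_extendAffineAbove_putPrice_le (hρ : Integrable (fun x => x) ρ)
    (hw : ρ.real (Iio a) ≤ w) (k : ℝ) :
    derivWithin (extendAffineAbove (putPrice ρ) a w) (Iio k) k ≤ w := by
  rcases lt_or_ge a k with h | h
  · rw [derivWithin_extendAffineAbove_of_lt h (uniqueDiffWithinAt_Iio k)]
  · have hP := (convexOn_putPrice hρ).hasDerivWithinAt_leftDeriv_of_mem_interior (x := k)
      (by simp)
    rw [(hP.extendAffineAbove_Iio h).derivWithin (uniqueDiffWithinAt_Iio k)]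
    calc derivWithin (putPrice ρ) (Iio k) k ≤ ρ.real (Iio k) := leftDeriv_putPrice_le hρ k
      _ ≤ ρ.real (Iio a) := measureReal_mono (Iio_subset_Iio h)
      _ ≤ w := hw

lemma le_rightDeriv_extendAffineAbove_putPrice (hρ : Integrable (fun x => x) ρ) {k : ℝ}
    (hw : w ≤ ρ.real (Iic k)) :
    w ≤ derivWithin (extendAffineAbove (putPrice ρ) a w) (Ioi k) k := by
  rcases le_or_gt a k with h | h
  · rw [(hasDerivWithinAt_extendAffineAbove_Ioi h).derivWithin (uniqueDiffWithinAt_Ioi k)]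
  · have hP := (convexOn_putPrice hρ).hasDerivWithinAt_rightDeriv_of_mem_interior (x := k)
      (by simp)
    rw [(hP.extendAffineAbove_of_lt h).derivWithin (uniqueDiffWithinAt_Ioi k)]
    exact hw.trans (measureReal_Iic_le_rightDeriv_putPrice hρ k)

end

section quantile

variable {G : ℝ → ℝ} {u v k : ℝ}

lemma MonotoneOn.lt_of_sInf_image_Ioo_lt (hG : MonotoneOn G (Ioo 0 1)) (hu : u ∈ Ioo 0 1)
    (hk : sInf (G '' Ioo u 1) < k) : G u < k := by
  refine lt_of_le_of_lt (le_csInf ((nonempty_Ioo.2 hu.2).image G) ?_) hk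
  rintro _ ⟨w, hw, rfl⟩
  exact hG hu ⟨hu.1.trans hw.1, hw.2⟩ hw.1.le

lemma le_measureReal_Iic_of_sSup_image_Ioo_le {μ : Measure ℝ} [IsFiniteMeasure μ]
    (hG : MonotoneOn G (Ioo 0 1)) (hGq : ∀ w ∈ Ioo (0:ℝ) 1, w ≤ μ.real (Iic (G w)))
    (hv : v ∈ Ioo 0 1) (hk : sSup (G '' Ioo 0 v) ≤ k) : v ≤ μ.real (Iic k) := by
  have hbdd : BddAbove (G '' Ioo 0 v) := by
    refine ⟨G v, ?_⟩
    rintro _ ⟨w, hw, rfl⟩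
    exact hG ⟨hw.1, hw.2.trans hv.2⟩ hv hw.2.le
  refine le_of_forall_lt_imp_le_of_dense fun w hwv => ?_
  rcases le_or_gt w 0 with hw0 | hw0
  · exact hw0.trans measureReal_nonneg
  have hw : w ∈ Ioo 0 1 := ⟨hw0, hwv.trans hv.2⟩
  have hGw : G w ≤ k := (le_csSup hbdd (mem_image_of_mem G ⟨hw0, hwv⟩)).trans hk
  exact (hGq w hw).trans (measureReal_mono (Iic_subset_Iic.2 hGw))

end quantile

theorem stmt8_general
    (μ ν : Measure ℝ)
    [IsProbabilityMeasure μ] [IsProbabilityMeasure ν]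
    (hμint : Integrable (fun x => x) μ) (hνint : Integrable (fun x => x) ν)
    (Pμ Pν : ℝ → ℝ)
    (hPμ : ∀ k, Pμ k = ∫ x, max (k - x) 0 ∂μ)
    (hPν : ∀ k, Pν k = ∫ x, max (k - x) 0 ∂ν)
    (G : ℝ → ℝ) (hGmono : MonotoneOn G (Set.Ioo 0 1))
    (hGq : ∀ u ∈ Set.Ioo (0:ℝ) 1,
      (μ (Set.Iio (G u))).toReal ≤ u ∧ u ≤ (μ (Set.Iic (G u))).toReal)
    (E : ℝ → ℝ → ℝ)
    (hE : ∀ u ∈ Set.Ioo (0:ℝ) 1, ∀ k, E u k = Pν k - Pμ (min k (G u)) - u * max (k - G u) 0)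
    (u v k : ℝ) (hu : 0 < u) (huv : u < v) (hv : v < 1)
    (hk1 : sSup (G '' Set.Ioo 0 v) ≤ k)
    (hk3 : sInf (G '' Set.Ioo u 1) < k)
    (ψ : ℝ) (hψ1 : derivWithin (E v) (Set.Iio k) k ≤ ψ)
    (hψ2 : ψ ≤ derivWithin (E v) (Set.Ioi k) k) :
    derivWithin (E u) (Set.Iio k) k ≤ ψ + (v - u) ∧
    ψ + (v - u) ≤ derivWithin (E u) (Set.Ioi k) k := by
  obtain rfl : Pμ = putPrice μ := funext hPμ
  obtain rfl : Pν = putPrice ν := funext hPν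
  have hu1 : u ∈ Ioo (0:ℝ) 1 := ⟨hu, huv.trans hv⟩
  have hv1 : v ∈ Ioo (0:ℝ) 1 := ⟨hu.trans huv, hv⟩
  have hEw : ∀ w ∈ Ioo (0:ℝ) 1, E w = putPrice ν - extendAffineAbove (putPrice μ) (G w) w :=
    fun w hw => funext fun x => by rw [hE w hw, Pi.sub_apply, extendAffineAbove, sub_sub]
  have hGu : G u < k := hGmono.lt_of_sInf_image_Ioo_lt hu1 hk3
  have hvk : v ≤ μ.real (Iic k) :=
    le_measureReal_Iic_of_sSup_image_Ioo_le hGmono (fun w hw => (hGq w hw).2) hv1 hk1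
  have hνc := convexOn_putPrice hνint
  have hμc := convexOn_putPrice hμint
  rw [hEw v hv1, hνc.derivWithin_sub_extendAffineAbove_Iio hμc] at hψ1
  rw [hEw v hv1, hνc.derivWithin_sub_extendAffineAbove_Ioi hμc] at hψ2
  rw [hEw u hu1, hνc.derivWithin_sub_extendAffineAbove_Iio hμc,
    hνc.derivWithin_sub_extendAffineAbove_Ioi hμc,
    derivWithin_extendAffineAbove_of_lt hGu (uniqueDiffWithinAt_Iio k),
    derivWithin_extendAffineAbove_of_lt hGu (uniqueDiffWithinAt_Ioi k)]
  have hLv_left := leftDeriv_extendAffineAbove_putPrice_le hμint (hGq v hv1).1 k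
  have hLv_right := le_rightDeriv_extendAffineAbove_putPrice hμint (a := G v) hvk
  constructor <;> linarith

theorem stmt8
    (μ ν : Measure ℝ)
    [IsProbabilityMeasure μ] [IsProbabilityMeasure ν]
    (hμint : Integrable (fun x => x) μ) (hνint : Integrable (fun x => x) ν)
    (hcx : ∀ f : ℝ → ℝ, ConvexOn ℝ Set.univ f → Integrable f μ → Integrable f ν →
      ∫ x, f x ∂μ ≤ ∫ x, f x ∂ν)
    (Pμ Pν D : ℝ → ℝ)
    (hPμ : ∀ k, Pμ k = ∫ x, max (k - x) 0 ∂μ)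
    (hPν : ∀ k, Pν k = ∫ x, max (k - x) 0 ∂ν)
    (hD : ∀ k, D k = Pν k - Pμ k)
    (hDconn : Set.OrdConnected {k : ℝ | 0 < D k})
    (G : ℝ → ℝ) (hGmono : MonotoneOn G (Set.Ioo 0 1))
    (hGq : ∀ u ∈ Set.Ioo (0:ℝ) 1,
      (μ (Set.Iio (G u))).toReal ≤ u ∧ u ≤ (μ (Set.Iic (G u))).toReal)
    (E Ec : ℝ → ℝ → ℝ)
    (hE : ∀ u ∈ Set.Ioo (0:ℝ) 1, ∀ k, E u k = Pν k - Pμ (min k (G u)) - u * max (k - G u) 0)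
    (hEcConv : ∀ u ∈ Set.Ioo (0:ℝ) 1, ConvexOn ℝ Set.univ (Ec u))
    (hEcLe : ∀ u ∈ Set.Ioo (0:ℝ) 1, ∀ k, Ec u k ≤ E u k)
    (hEcMax : ∀ u ∈ Set.Ioo (0:ℝ) 1, ∀ h : ℝ → ℝ, ConvexOn ℝ Set.univ h →
      (∀ k, h k ≤ E u k) → ∀ k, h k ≤ Ec u k)
    (u v k : ℝ) (hu : 0 < u) (huv : u < v) (hv : v < 1)
    (hk1 : sSup (G '' Set.Ioo 0 v) ≤ k) (hk2 : k ≤ sInf (G '' Set.Ioo v 1))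
    (hk3 : sInf (G '' Set.Ioo u 1) < k)
    (hEv : derivWithin (E v) (Set.Iio k) k ≤ derivWithin (E v) (Set.Ioi k) k)
    (ψ : ℝ) (hψ1 : derivWithin (E v) (Set.Iio k) k ≤ ψ)
    (hψ2 : ψ ≤ derivWithin (E v) (Set.Ioi k) k) :
    derivWithin (E u) (Set.Iio k) k ≤ ψ + (v - u) ∧
    ψ + (v - u) ≤ derivWithin (E u) (Set.Ioi k) k :=
  stmt8_general μ ν hμint hνint Pμ Pν hPμ hPν G hGmono hGq E hE u v k hu huv hv hk1 hk3 ψ hψ1 hψ2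
end

section
/- Let 0 < u < v < 1. If there exists z ∈ ℝ with ℰ_u^c(z) = ℰ_v^c(z) = ℰ_u(z), then ℰ_u^c(k) = ℰ_v^c(k) for every k ≤ z. -/
open MeasureTheory Set

/-!
Write `ℰ_u = P_ν - L_u`, where `L_u = linearContinuation P_μ (G u) u` is `P_μ` on `(-∞, G u]`
continued affinely with slope `u`.
Since `P_μ` grows with slope `μ(-∞, k] ≥ u` to the right of `G u`, the difference
`ℰ_u - ℰ_v = L_v - L_u` vanishes left of `G u` and is nondecreasing; hence `ℰ_v ≤ ℰ_u`, so
`ℰ_v^c ≤ ℰ_u^c`, and `ℰ_u(z) = ℰ_u^c(z) = ℰ_v^c(z) ≤ ℰ_v(z)` forces `ℰ_u = ℰ_v` on `(-∞, z]`.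
Gluing `ℰ_u^c` on `(-∞, z]` to a supporting line of `ℰ_v^c` at `z` (which also supports
`ℰ_u^c`, as `ℰ_v^c ≤ ℰ_u^c` with equality at `z`) gives a convex minorant of `ℰ_v`,
so `ℰ_u^c ≤ ℰ_v^c` on `(-∞, z]`.
-/

lemma ConvexOn.exists_supportLine {f : ℝ → ℝ} (hf : ConvexOn ℝ univ f) (z : ℝ) :
    ∃ s : ℝ, ∀ k, f z + s * (k - z) ≤ f k := by
  have hz : z ∈ interior univ := by simp
  refine ⟨derivWithin f (Ioi z) z, fun k => ?_⟩
  rcases lt_trichotomy k z with hk | rfl | hk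
  · have h := (hf.slope_le_leftDeriv_of_mem_interior (mem_univ k) hz hk).trans
      (hf.leftDeriv_le_rightDeriv_of_mem_interior hz)
    rw [slope_def_field, div_le_iff₀ (sub_pos.2 hk)] at h
    linarith
  · simp
  · have h := hf.rightDeriv_le_slope_of_mem_interior hz (mem_univ k) hk
    rw [slope_def_field, le_div_iff₀ (sub_pos.2 hk)] at h
    linarith

lemma ConvexOn.antitoneOn_Iic_of_isMinOn {f : ℝ → ℝ} {z : ℝ} (hf : ConvexOn ℝ univ f)
    (hmin : IsMinOn f univ z) : AntitoneOn f (Iic z) := by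
  intro x _ y hy hxy
  rcases (mem_Iic.1 hy).eq_or_lt with rfl | hyz
  · exact hmin (mem_univ x)
  · exact hf.le_left_of_right_le'' (mem_univ x) (mem_univ z) hxy hyz (hmin (mem_univ y))

lemma ConvexOn.comp_min_of_isMinOn {f : ℝ → ℝ} {z : ℝ} (hf : ConvexOn ℝ univ f)
    (hmin : IsMinOn f univ z) : ConvexOn ℝ univ (fun k => f (min k z)) := by
  have himage : (fun k => min k z) '' univ = Iic z := by
    ext k
    exact ⟨fun ⟨y, _, hy⟩ => hy ▸ min_le_right y z, fun hk => ⟨k, mem_univ k, min_eq_left hk⟩⟩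
  refine (hf.subset (subset_univ _) ?_).comp_concaveOn ?_ ?_
  · exact himage ▸ convex_Iic z
  · exact (concaveOn_id (convex_univ (𝕜 := ℝ))).inf (concaveOn_const z convex_univ)
  · exact himage ▸ hf.antitoneOn_Iic_of_isMinOn hmin

lemma convexOn_affine (c s z : ℝ) : ConvexOn ℝ univ (fun k => c + s * (k - z)) :=
  ⟨convex_univ, fun x _ y _ a b _ _ hab => le_of_eq (by
    simp only [smul_eq_mul]; linear_combination (s * z - c) * hab)⟩

def linearContinuation (f : ℝ → ℝ) (a s k : ℝ) : ℝ := f (min k a) + s * max (k - a) 0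

lemma linearContinuation_of_le {f : ℝ → ℝ} {a s k : ℝ} (hk : k ≤ a) :
    linearContinuation f a s k = f k := by
  simp [linearContinuation, hk]

lemma linearContinuation_sub_linearContinuation {f : ℝ → ℝ} {a b u v : ℝ} (hab : a ≤ b) (k : ℝ) :
    linearContinuation f b v k - linearContinuation f a u k
      = (f (max a (min b k)) - u * max a (min b k)) - (f a - u * a) + (v - u) * max (k - b) 0 := by
  rcases le_total k a with hka | hak
  · have hkb := hka.trans hab
    simp [linearContinuation, hka, hkb]
  · rcases le_total k b with hkb | hbk
    · simp [linearContinuation, hak, hkb]; ring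
    · simp [linearContinuation, hak, hbk, hab]; ring

lemma convexOn_linearContinuation {f : ℝ → ℝ} {z s : ℝ} (hf : ConvexOn ℝ univ f)
    (hs : ∀ k, f z + s * (k - z) ≤ f k) : ConvexOn ℝ univ (linearContinuation f z s) := by
  set φ : ℝ → ℝ := fun k => f k + (-f z + -s * (k - z))
  have hφ : ConvexOn ℝ univ φ := hf.add (convexOn_affine _ _ _)
  have hmin : IsMinOn φ univ z := fun k _ => by show φ z ≤ φ k; simp only [φ]; linarith [hs k]
  have hsplit : linearContinuation f z s = fun k => φ (min k z) + (f z + s * (k - z)) := by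
    funext k
    rcases le_total k z with hk | hk
    · simp [linearContinuation, φ, hk]; ring
    · simp [linearContinuation, φ, hk]
  rw [hsplit]
  exact (hφ.comp_min_of_isMinOn hmin).add (convexOn_affine _ _ _)

lemma monotone_linearContinuation_sub {f : ℝ → ℝ} {a b u v : ℝ} (hab : a ≤ b) (huv : u ≤ v)
    (hf : MonotoneOn (fun t => f t - u * t) (Ici a)) :
    Monotone (linearContinuation f b v - linearContinuation f a u) := by
  intro k k' hkk
  simp only [Pi.sub_apply, linearContinuation_sub_linearContinuation hab]
  have hclamp : max a (min b k) ≤ max a (min b k') := by gcongr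
  have hf' := hf (le_max_left a (min b k)) (le_max_left a (min b k')) hclamp
  have hpos : (v - u) * max (k - b) 0 ≤ (v - u) * max (k' - b) 0 :=
    mul_le_mul_of_nonneg_left (by gcongr) (sub_nonneg.2 huv)
  dsimp only at hf'
  linarith

lemma linearContinuation_le_linearContinuation {f : ℝ → ℝ} {a b u v : ℝ} (hab : a ≤ b)
    (huv : u ≤ v) (hf : MonotoneOn (fun t => f t - u * t) (Ici a)) (k : ℝ) :
    linearContinuation f a u k ≤ linearContinuation f b v k := by
  have h := monotone_linearContinuation_sub hab huv hf (min_le_left k a)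
  simp only [Pi.sub_apply, linearContinuation_of_le (min_le_right k a),
    linearContinuation_of_le ((min_le_right k a).trans hab), sub_self] at h
  linarith

lemma mul_measureReal_Iic_le_integral_sub (μ : Measure ℝ) [IsFiniteMeasure μ]
    (hint : Integrable (fun x => x) μ) {c c' : ℝ} (hcc' : c ≤ c') :
    (c' - c) * μ.real (Iic c) ≤ ∫ x, max (c' - x) 0 ∂μ - ∫ x, max (c - x) 0 ∂μ := by
  have hint_c : Integrable (fun x => max (c - x) 0) μ := ((integrable_const c).sub hint).pos_part
  have hint_c' : Integrable (fun x => max (c' - x) 0) μ :=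
    ((integrable_const c').sub hint).pos_part
  rw [← integral_sub hint_c' hint_c, mul_comm, ← smul_eq_mul,
    ← integral_indicator_const _ measurableSet_Iic]
  refine integral_mono ((integrable_const _).indicator measurableSet_Iic) (hint_c'.sub hint_c)
    fun x => ?_
  by_cases hx : x ≤ c
  · simp [hx, hx.trans hcc']
  · simp [hx, (not_le.1 hx).le]

lemma monotoneOn_integral_posPart_sub_mul (μ : Measure ℝ) [IsFiniteMeasure μ]
    (hint : Integrable (fun x => x) μ) {a u : ℝ} (hu : u ≤ μ.real (Iic a)) :
    MonotoneOn (fun t => ∫ x, max (t - x) 0 ∂μ - u * t) (Ici a) := by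
  intro t ht t' _ htt'
  have hincr := mul_measureReal_Iic_le_integral_sub μ hint htt'
  have hu_t : u ≤ μ.real (Iic t) := hu.trans (measureReal_mono (Iic_subset_Iic.2 ht))
  nlinarith [mul_le_mul_of_nonneg_left hu_t (sub_nonneg.2 htt')]

def IsLargestConvexMinorant_s9 (fc f : ℝ → ℝ) : Prop :=
  ConvexOn ℝ univ fc ∧ fc ≤ f ∧ ∀ h : ℝ → ℝ, ConvexOn ℝ univ h → h ≤ f → h ≤ fc

lemma IsLargestConvexMinorant_s9.eqOn_Iic {f g fc gc : ℝ → ℝ} {z : ℝ}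
    (hfc : IsLargestConvexMinorant_s9 fc f) (hgc : IsLargestConvexMinorant_s9 gc g) (hgf : g ≤ f)
    (hfg : EqOn f g (Iic z)) (hz : fc z = gc z) : EqOn fc gc (Iic z) := by
  obtain ⟨hfc_conv, hfc_le, hfc_max⟩ := hfc
  obtain ⟨hgc_conv, hgc_le, hgc_max⟩ := hgc
  have hgc_fc : gc ≤ fc := hfc_max gc hgc_conv (hgc_le.trans hgf)
  obtain ⟨s, hs⟩ := hgc_conv.exists_supportLine z
  have hs_fc : ∀ k, fc z + s * (k - z) ≤ fc k := fun k => hz ▸ (hs k).trans (hgc_fc k)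
  have hglue : linearContinuation fc z s ≤ g := by
    intro k
    rcases le_total k z with hk | hk
    · rw [linearContinuation_of_le hk, ← hfg hk]
      exact hfc_le k
    · simp only [linearContinuation, min_eq_right hk, max_eq_left (sub_nonneg.2 hk), hz]
      exact (hs k).trans (hgc_le k)
  intro k hk
  have hle := hgc_max _ (convexOn_linearContinuation hfc_conv hs_fc) hglue k
  rw [linearContinuation_of_le hk] at hle
  exact le_antisymm hle (hgc_fc k)

theorem stmt9_general
    (μ : Measure ℝ)
    [IsProbabilityMeasure μ]
    (hμint : Integrable (fun x => x) μ)
    (Pμ Pν : ℝ → ℝ)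
    (hPμ : ∀ k, Pμ k = ∫ x, max (k - x) 0 ∂μ)
    (G : ℝ → ℝ) (hGmono : MonotoneOn G (Set.Ioo 0 1))
    (hGq : ∀ u ∈ Set.Ioo (0:ℝ) 1,
      (μ (Set.Iio (G u))).toReal ≤ u ∧ u ≤ (μ (Set.Iic (G u))).toReal)
    (E Ec : ℝ → ℝ → ℝ)
    (hE : ∀ u ∈ Set.Ioo (0:ℝ) 1, ∀ k, E u k = Pν k - Pμ (min k (G u)) - u * max (k - G u) 0)
    (hEcConv : ∀ u ∈ Set.Ioo (0:ℝ) 1, ConvexOn ℝ Set.univ (Ec u))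
    (hEcLe : ∀ u ∈ Set.Ioo (0:ℝ) 1, ∀ k, Ec u k ≤ E u k)
    (hEcMax : ∀ u ∈ Set.Ioo (0:ℝ) 1, ∀ h : ℝ → ℝ, ConvexOn ℝ Set.univ h →
      (∀ k, h k ≤ E u k) → ∀ k, h k ≤ Ec u k)
    (u v : ℝ) (hu : 0 < u) (huv : u < v) (hv : v < 1)
    (z : ℝ) (hz1 : Ec u z = Ec v z) (hz2 : Ec u z = E u z) :
    ∀ k ≤ z, Ec u k = Ec v k := by
  have hu' : u ∈ Ioo (0:ℝ) 1 := ⟨hu, huv.trans hv⟩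
  have hv' : v ∈ Ioo (0:ℝ) 1 := ⟨hu.trans huv, hv⟩
  have hEc : ∀ w ∈ Ioo (0:ℝ) 1, IsLargestConvexMinorant_s9 (Ec w) (E w) := fun w hw =>
    ⟨hEcConv w hw, hEcLe w hw, fun h hh hle => hEcMax w hw h hh hle⟩
  have hE_lc : ∀ w ∈ Ioo (0:ℝ) 1, ∀ k, E w k = Pν k - linearContinuation Pμ (G w) w k :=
    fun w hw k => by rw [hE w hw k, linearContinuation]; ring
  obtain rfl : Pμ = fun k => ∫ x, max (k - x) 0 ∂μ := funext hPμ
  have hGuv := hGmono hu' hv' huv.le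
  have hPμ_mono := monotoneOn_integral_posPart_sub_mul μ hμint (hGq u hu').2
  have hd_mono := monotone_linearContinuation_sub hGuv huv.le hPμ_mono
  have hEvu : E v ≤ E u := fun k => by
    rw [hE_lc u hu', hE_lc v hv']
    linarith [linearContinuation_le_linearContinuation hGuv huv.le hPμ_mono k]
  have hEz : E u z ≤ E v z := by
    rw [← hz2, hz1]
    exact hEcLe v hv' z
  have hEuv : EqOn (E u) (E v) (Iic z) := fun k hk => by
    have hdk := hd_mono (mem_Iic.1 hk)
    simp only [Pi.sub_apply] at hdk
    linarith [hE_lc u hu' k, hE_lc v hv' k, hE_lc u hu' z, hE_lc v hv' z, hEvu k]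
  exact fun k hk => (hEc u hu').eqOn_Iic (hEc v hv') hEvu hEuv hz1 hk

theorem stmt9
    (μ ν : Measure ℝ)
    [IsProbabilityMeasure μ] [IsProbabilityMeasure ν]
    (hμint : Integrable (fun x => x) μ) (hνint : Integrable (fun x => x) ν)
    (hcx : ∀ f : ℝ → ℝ, ConvexOn ℝ Set.univ f → Integrable f μ → Integrable f ν →
      ∫ x, f x ∂μ ≤ ∫ x, f x ∂ν)
    (Pμ Pν D : ℝ → ℝ)
    (hPμ : ∀ k, Pμ k = ∫ x, max (k - x) 0 ∂μ)
    (hPν : ∀ k, Pν k = ∫ x, max (k - x) 0 ∂ν)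
    (hD : ∀ k, D k = Pν k - Pμ k)
    (hDconn : Set.OrdConnected {k : ℝ | 0 < D k})
    (G : ℝ → ℝ) (hGmono : MonotoneOn G (Set.Ioo 0 1))
    (hGq : ∀ u ∈ Set.Ioo (0:ℝ) 1,
      (μ (Set.Iio (G u))).toReal ≤ u ∧ u ≤ (μ (Set.Iic (G u))).toReal)
    (E Ec : ℝ → ℝ → ℝ)
    (hE : ∀ u ∈ Set.Ioo (0:ℝ) 1, ∀ k, E u k = Pν k - Pμ (min k (G u)) - u * max (k - G u) 0)
    (hEcConv : ∀ u ∈ Set.Ioo (0:ℝ) 1, ConvexOn ℝ Set.univ (Ec u))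
    (hEcLe : ∀ u ∈ Set.Ioo (0:ℝ) 1, ∀ k, Ec u k ≤ E u k)
    (hEcMax : ∀ u ∈ Set.Ioo (0:ℝ) 1, ∀ h : ℝ → ℝ, ConvexOn ℝ Set.univ h →
      (∀ k, h k ≤ E u k) → ∀ k, h k ≤ Ec u k)
    (u v : ℝ) (hu : 0 < u) (huv : u < v) (hv : v < 1)
    (z : ℝ) (hz1 : Ec u z = Ec v z) (hz2 : Ec u z = E u z) :
    ∀ k ≤ z, Ec u k = Ec v k :=
  stmt9_general μ hμint Pμ Pν hPμ G hGmono hGq E Ec hE hEcConv hEcLe hEcMax u v hu huv hv z hz1 hz2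
end
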